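/- arXiv:2106.10320 — 3 statements merged into one kernel-verified Lean document; each statement's English description precedes it below -/
import Mathlib

section
/- For every integer c ≥ 1, every integer a, and every n ≥ 0, the counts v(a,c;n) are weakly increasing in n: v(a,c;n) ≤ v(a,c;n+1). -/
open Complex Real Filter Topology

noncomputable section

/-- An odd-balanced unimodal sequence, encoded as (left list `L`, peak `p`, right list `R`):
all parts positive, the peak `p` is even and strictly larger than all other parts,
the left side is weakly increasing and the right side weakly decreasing, repeated
(i.e. equal consecutive) parts are allowed only when they are odd, and the odd parts
before the peak are identical to the odd parts after the peak. -/
def IsOddBalanced (L : List ℕ) (p : ℕ) (R : List ℕ) : Prop :=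
  Even p ∧ 0 < p ∧ (∀ x ∈ L, 0 < x) ∧ (∀ x ∈ R, 0 < x) ∧
  L.Chain' (fun a b => a ≤ b ∧ (a = b → Odd a)) ∧
  R.Chain' (fun a b => b ≤ a ∧ (a = b → Odd a)) ∧
  (∀ x ∈ L, x < p) ∧ (∀ x ∈ R, x < p) ∧
  L.filter (fun x => x % 2 == 1) = R.reverse.filter (fun x => x % 2 == 1)

/-- `v(m,n)`: number of odd-balanced unimodal sequences of size `2n+2` and rank `m`. -/
def oddBalancedCount (m : ℤ) (n : ℕ) : ℕ :=
  Nat.card {x : List ℕ × ℕ × List ℕ //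
    IsOddBalanced x.1 x.2.1 x.2.2 ∧ x.1.sum + x.2.1 + x.2.2.sum = 2 * n + 2 ∧
    (x.2.2.length : ℤ) - (x.1.length : ℤ) = m}

/-- `v(a,c;n)`: number of odd-balanced unimodal sequences of size `2n+2`
whose rank is congruent to `a` modulo `c`. -/
def oddBalancedCountMod (a : ℤ) (c : ℕ) (n : ℕ) : ℕ :=
  Nat.card {x : List ℕ × ℕ × List ℕ //
    IsOddBalanced x.1 x.2.1 x.2.2 ∧ x.1.sum + x.2.1 + x.2.2.sum = 2 * n + 2 ∧
    (x.2.2.length : ℤ) - (x.1.length : ℤ) ≡ a [ZMOD (c : ℤ)]}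

/-- `v(n)`: total number of odd-balanced unimodal sequences of size `2n+2`. -/
def oddBalancedTotal (n : ℕ) : ℕ :=
  Nat.card {x : List ℕ × ℕ × List ℕ //
    IsOddBalanced x.1 x.2.1 x.2.2 ∧ x.1.sum + x.2.1 + x.2.2.sum = 2 * n + 2}

/-- Overpartition function `p̄(n)`: each partition of `n` is counted with
multiplicity `2^(number of distinct parts)` (the overlined parts), which matches the
generating function `∏ (1+qⁿ)/(1-qⁿ)`. -/
def overpartition (n : ℕ) : ℕ := ∑ p : n.Partition, 2 ^ p.parts.toFinset.card


open Fin.NatCast in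
lemma finite_posSum (N : ℕ) : {l : List ℕ | l.sum ≤ N ∧ ∀ x ∈ l, 0 < x}.Finite := by
  apply Set.Finite.subset ((List.finite_length_le (Fin (N+1)) N).image (List.map Fin.val))
  rintro l ⟨hs, hp⟩
  refine ⟨l.map (Nat.cast), ?_, ?_⟩
  · simpa using le_trans (List.length_le_sum_of_one_le l hp) hs
  · simp only [List.map_map]
    have : ∀ x ∈ l, ((Fin.val ∘ (Nat.cast : ℕ → Fin (N+1))) x) = id x := by
      intro x hx
      have hxN : x < N + 1 :=
        Nat.lt_succ_of_le (le_trans (List.le_sum_of_mem hx) hs)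
      simp [Fin.val_cast_of_lt hxN]
    rw [List.map_congr_left this, List.map_id]

lemma finite_odd (M : ℕ) : Set.Finite {x : List ℕ × ℕ × List ℕ |
    IsOddBalanced x.1 x.2.1 x.2.2 ∧ x.1.sum + x.2.1 + x.2.2.sum = M} := by
  apply Set.Finite.subset (((finite_posSum M).prod ((Set.finite_Iic M).prod (finite_posSum M))))
  rintro x ⟨hb, hsum⟩
  have h1 : x.1.sum ≤ M := hsum ▸ le_trans (Nat.le_add_right _ _) (Nat.le_add_right _ _)
  have h2 : x.2.1 ≤ M := hsum ▸ le_trans (Nat.le_add_left _ _) (Nat.le_add_right _ _)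
  have h3 : x.2.2.sum ≤ M := hsum ▸ Nat.le_add_left _ _
  exact ⟨⟨h1, hb.2.2.1⟩, h2, h3, hb.2.2.2.1⟩


lemma oddBalanced_step (L : List ℕ) (p : ℕ) (R : List ℕ) (n : ℕ) (a : ℤ) (c : ℕ)
    (h : IsOddBalanced L p R ∧ L.sum + p + R.sum = 2 * n + 2 ∧
      (R.length : ℤ) - (L.length : ℤ) ≡ a [ZMOD (c : ℤ)]) :
    IsOddBalanced L (p + 2) R ∧ L.sum + (p + 2) + R.sum = 2 * (n + 1) + 2 ∧
      (R.length : ℤ) - (L.length : ℤ) ≡ a [ZMOD (c : ℤ)] := by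
  obtain ⟨⟨he, hp, hL, hR, hcL, hcR, hlt, hrt, hf⟩, hs, hr⟩ := h
  exact ⟨⟨he.add even_two, by omega, hL, hR, hcL, hcR,
    fun x hx => lt_trans (hlt x hx) (by omega),
    fun x hx => lt_trans (hrt x hx) (by omega), hf⟩, by omega, hr⟩

/-- The counts `v(a,c;n)` are weakly increasing in `n`. -/
theorem oddBalancedCountMod_monotone (a : ℤ) (c : ℕ) (hc : 1 ≤ c) (n : ℕ) :
    oddBalancedCountMod a c n ≤ oddBalancedCountMod a c (n + 1) := by
  classical
  have hfin : Set.Finite {x : List ℕ × ℕ × List ℕ |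
      IsOddBalanced x.1 x.2.1 x.2.2 ∧ x.1.sum + x.2.1 + x.2.2.sum = 2 * (n + 1) + 2 ∧
      (x.2.2.length : ℤ) - (x.1.length : ℤ) ≡ a [ZMOD (c : ℤ)]} := by
    apply Set.Finite.subset (finite_odd (2 * (n + 1) + 2))
    rintro x ⟨hb, hs, _⟩
    exact ⟨hb, hs⟩
  haveI : Finite {x : List ℕ × ℕ × List ℕ //
      IsOddBalanced x.1 x.2.1 x.2.2 ∧ x.1.sum + x.2.1 + x.2.2.sum = 2 * (n + 1) + 2 ∧
      (x.2.2.length : ℤ) - (x.1.length : ℤ) ≡ a [ZMOD (c : ℤ)]} := hfin.to_subtype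
  unfold oddBalancedCountMod
  apply Nat.card_le_card_of_injective
    (f := fun y => ⟨(y.1.1, y.1.2.1 + 2, y.1.2.2),
      oddBalanced_step y.1.1 y.1.2.1 y.1.2.2 n a c y.2⟩)
  rintro ⟨⟨L, p, R⟩, _⟩ ⟨⟨L', p', R'⟩, _⟩ h
  simp only [Subtype.mk.injEq, Prod.mk.injEq] at h
  exact Subtype.ext (by simp only [Prod.mk.injEq]; exact ⟨h.1, by omega, h.2.2⟩)
end
end

section
/- Let z be a real number with −1/2 < z < 1/2. Then as τ → 0 within the complex upper half-plane ℍ, h(z;τ) converges to h(z;0) = ∫_{−∞}^{∞} e^{−2πzx}/cosh(πx) dx, and this limit is a strictly positive real number. -/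
open Complex Real Filter Topology MeasureTheory Set

noncomputable section

lemma integrable_exp_neg_mul_abs' {c : ℝ} (hc : 0 < c) :
    Integrable (fun x : ℝ => Real.exp (-(c * |x|))) := by
  have h1 : IntegrableOn (fun x : ℝ => Real.exp (-(c * |x|))) (Ioi 0) := by
    refine (exp_neg_integrableOn_Ioi 0 hc).congr_fun (fun x hx => ?_) measurableSet_Ioi
    rw [abs_of_pos hx, ← neg_mul]
  have h2 : IntegrableOn (fun x : ℝ => Real.exp (-(c * |x|))) (Iic 0) := by
    have m : MeasurableEmbedding fun x : ℝ => -x := (Homeomorph.neg ℝ).measurableEmbedding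
    rw [IntegrableOn, ← Measure.map_neg_eq_self (volume : Measure ℝ)]
    rw [Measure.restrict_map m.measurable measurableSet_Iic, m.integrable_map_iff]
    simp_rw [Function.comp_def, abs_neg, neg_preimage, neg_Iic, neg_zero]
    exact (integrableOn_Ici_iff_integrableOn_Ioi).mpr h1
  have := h2.union h1
  rwa [Iic_union_Ioi, integrableOn_univ] at this

lemma mordell_bound_le (z : ℝ) (x : ℝ) :
    Real.exp (-(2 * π * z * x)) / Real.cosh (π * x)
      ≤ 2 * Real.exp (-(π * (1 - 2 * |z|) * |x|)) := by
  have hcosh : Real.exp (π * |x|) ≤ 2 * Real.cosh (π * x) := by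
    have : Real.cosh (π * x) = Real.cosh (π * |x|) := by
      rw [← Real.cosh_abs, abs_mul, abs_of_pos Real.pi_pos]
    rw [this, Real.cosh_eq]
    have := Real.exp_pos (-(π * |x|))
    linarith
  rw [div_le_iff₀ (Real.cosh_pos (π * x))]
  have h1 : Real.exp (-(2 * π * z * x)) ≤ Real.exp (2 * π * |z| * |x|) := by
    refine Real.exp_le_exp.mpr ?_
    calc -(2 * π * z * x) ≤ |2 * π * z * x| := neg_le_abs _
      _ = 2 * π * |z| * |x| := by
          rw [abs_mul, abs_mul, abs_mul, abs_of_pos Real.pi_pos]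
          norm_num
  have h2 : Real.exp (2 * π * |z| * |x|)
      = Real.exp (-(π * (1 - 2 * |z|) * |x|)) * Real.exp (π * |x|) := by
    rw [← Real.exp_add]; ring_nf
  calc Real.exp (-(2 * π * z * x)) ≤ Real.exp (-(π * (1 - 2 * |z|) * |x|)) * Real.exp (π * |x|) := by
        rw [← h2]; exact h1
    _ ≤ Real.exp (-(π * (1 - 2 * |z|) * |x|)) * (2 * Real.cosh (π * x)) :=
        mul_le_mul_of_nonneg_left hcosh (Real.exp_pos _).le
    _ = 2 * Real.exp (-(π * (1 - 2 * |z|) * |x|)) * Real.cosh (π * x) := by ring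

lemma mordell_bound_integrable (z : ℝ) (hz : |z| < 1 / 2) :
    Integrable (fun x : ℝ => Real.exp (-(2 * π * z * x)) / Real.cosh (π * x)) := by
  have hc : 0 < π * (1 - 2 * |z|) := by
    have : 0 < 1 - 2 * |z| := by linarith
    exact mul_pos Real.pi_pos this
  refine ((integrable_exp_neg_mul_abs' hc).const_mul 2).mono' ?_ ?_
  · refine Continuous.aestronglyMeasurable (Continuous.div (by fun_prop) (by fun_prop) ?_)
    exact fun x => (Real.cosh_pos (π * x)).ne'
  · filter_upwards with x
    rw [Real.norm_eq_abs, _root_.abs_of_nonneg (by positivity)]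
    exact mordell_bound_le z x

/-- The Mordell integral `h(z;τ)`. -/
def mordell (z : ℝ) (τ : ℂ) : ℂ :=
  ∫ x : ℝ, Complex.exp (π * I * τ * (x : ℂ) ^ 2 - 2 * π * (z : ℂ) * (x : ℂ)) /
    Complex.cosh (π * (x : ℂ))

/-- Lemma 2.1 (limit part): for real `-1/2 < z < 1/2`, as `τ → 0` within `ℍ`,
`h(z;τ) → h(z;0) = ∫ e^{-2πzx}/cosh(πx) dx`, a strictly positive real number. -/
theorem mordell_tendsto_pos (z : ℝ) (hz₁ : -(1 / 2) < z) (hz₂ : z < 1 / 2) :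
    mordell z 0 = ((∫ x : ℝ, Real.exp (-(2 * π * z * x)) / Real.cosh (π * x) : ℝ) : ℂ) ∧
    (0 : ℝ) < ∫ x : ℝ, Real.exp (-(2 * π * z * x)) / Real.cosh (π * x) ∧
    Tendsto (fun τ : ℂ => mordell z τ)
      (nhdsWithin 0 {τ : ℂ | 0 < τ.im}) (nhds (mordell z 0)) := by
  have hz : |z| < 1 / 2 := abs_lt.mpr ⟨hz₁, hz₂⟩
  have hint := mordell_bound_integrable z hz
  have heq0 : mordell z 0
      = ((∫ x : ℝ, Real.exp (-(2 * π * z * x)) / Real.cosh (π * x) : ℝ) : ℂ) := by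
    rw [mordell]
    calc (∫ x : ℝ, Complex.exp (π * I * 0 * (x : ℂ) ^ 2 - 2 * π * (z : ℂ) * (x : ℂ)) /
          Complex.cosh (π * (x : ℂ)))
        = ∫ x : ℝ, ((Real.exp (-(2 * π * z * x)) / Real.cosh (π * x) : ℝ) : ℂ) := by
          refine integral_congr_ae (Eventually.of_forall fun x => ?_)
          simp only [Complex.ofReal_div, Complex.ofReal_exp, Complex.ofReal_cosh]
          push_cast
          ring_nf
      _ = _ := integral_ofReal
  refine ⟨heq0, ?_, ?_⟩
  · rw [integral_pos_iff_support_of_nonneg ?_ hint]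
    · have hsupp : Function.support
          (fun x : ℝ => Real.exp (-(2 * π * z * x)) / Real.cosh (π * x)) = Set.univ := by
        refine Set.eq_univ_of_forall fun x => ?_
        simp only [Function.mem_support]
        positivity
      rw [hsupp]
      simp
    · exact fun x => by positivity
  · rw [mordell]
    refine tendsto_integral_filter_of_dominated_convergence
      (fun x : ℝ => Real.exp (-(2 * π * z * x)) / Real.cosh (π * x)) ?_ ?_ hint ?_
    · filter_upwards with τ
      refine Continuous.aestronglyMeasurable (Continuous.div (by fun_prop) (by fun_prop) ?_)
      intro x
      rw [← Complex.ofReal_mul, ← Complex.ofReal_cosh]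
      exact_mod_cast (Real.cosh_pos (x := π * x)).ne'
    · filter_upwards [self_mem_nhdsWithin] with τ hτ
      refine Eventually.of_forall fun x => ?_
      have hre : ((π : ℂ) * I * τ * (x : ℂ) ^ 2 - 2 * π * (z : ℂ) * (x : ℂ)).re
          = -(π * τ.im * x ^ 2) - 2 * π * z * x := by
        simp [Complex.sub_re, Complex.mul_re, Complex.mul_im, ← Complex.ofReal_pow]
      rw [norm_div, Complex.norm_exp, hre]
      rw [← Complex.ofReal_mul, ← Complex.ofReal_cosh, Complex.norm_real, Real.norm_eq_abs,
        _root_.abs_of_pos (Real.cosh_pos (π * x))]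
      gcongr
      · have hτ' : (0 : ℝ) ≤ τ.im := le_of_lt hτ
        nlinarith [sq_nonneg x, mul_nonneg hτ' (sq_nonneg x), Real.pi_pos]
    · refine Eventually.of_forall fun x => ?_
      have hc : Continuous fun τ : ℂ =>
          Complex.exp (π * I * τ * (x : ℂ) ^ 2 - 2 * π * (z : ℂ) * (x : ℂ)) /
            Complex.cosh (π * (x : ℂ)) := by fun_prop
      exact (hc.tendsto 0).mono_left nhdsWithin_le_nhds
end
end

section
/- As τ → 0 in ℍ with |Re τ| ≤ M·Im τ for some fixed M > 0, the Appell sum satisfies A₁(1/(4τ), 1/(4τ); −1/(2τ)) ≪ q₀^{1/8}; that is, there exist constants C, δ > 0 such that for all such τ with |τ| < δ, |A₁(1/(4τ), 1/(4τ); −1/(2τ))| ≤ C·|e^{−πi/(4τ)}|. -/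
open Complex Real Filter Topology

noncomputable section

/-- The Jacobi theta function `ϑ(z;τ)`. -/
def jtheta (z τ : ℂ) : ℂ :=
  ∑' n : ℤ, Complex.exp (π * I * ((n : ℂ) + 1 / 2) ^ 2 * τ +
    2 * π * I * ((n : ℂ) + 1 / 2) * (z + 1 / 2))

/-- The level-one Appell sum `A₁(u,v;τ)`. -/
def appell (u v τ : ℂ) : ℂ :=
  Complex.exp (π * I * u) * ∑' n : ℤ, (-1 : ℂ) ^ n * Complex.exp (2 * π * I * (n : ℂ) * v) *
    Complex.exp (π * I * (n : ℂ) * ((n : ℂ) + 1) * τ) /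
    (1 - Complex.exp (2 * π * I * u) * Complex.exp (2 * π * I * (n : ℂ) * τ))

/-- The Appell-Lerch function `μ(u,v;τ) = A₁(u,v;τ)/ϑ(v;τ)`. -/
def mu (u v τ : ℂ) : ℂ := appell u v τ / jtheta v τ

/-- Dedekind's eta function. -/
def eta (τ : ℂ) : ℂ :=
  Complex.exp (π * I * τ / 12) * ∏' n : ℕ, (1 - Complex.exp (2 * π * I * τ * ((n : ℂ) + 1)))

/-- The generating function `V(w;q)` of odd-balanced unimodal sequences. -/
def Vgen (w q : ℂ) : ℂ :=
  ∑' n : ℕ, ((∏ j ∈ Finset.range n, (1 + w * q ^ (j + 1))) *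
    (∏ j ∈ Finset.range n, (1 + w⁻¹ * q ^ (j + 1))) * q ^ n) /
    ∏ j ∈ Finset.range (n + 1), (1 - q ^ (2 * j + 1))

/-- The angular region `|Re τ| ≤ M Im τ` in the upper half-plane. -/
def angleRegion (M : ℝ) : Set ℂ := {τ : ℂ | 0 < τ.im ∧ |τ.re| ≤ M * τ.im}

set_option maxHeartbeats 1600000 in
/-- `A₁(1/(4τ), 1/(4τ); -1/(2τ)) ≪ q₀^{1/8}` as `τ → 0` in an angular region. -/
theorem appell_estimate (M : ℝ) (hM : 0 < M) :
    ∃ C δ : ℝ, 0 < C ∧ 0 < δ ∧ ∀ τ : ℂ, τ ∈ angleRegion M → ‖τ‖ < δ →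
      ‖appell (1 / (4 * τ)) (1 / (4 * τ)) (-1 / (2 * τ))‖ ≤
        C * ‖Complex.exp (-(π * I) / (4 * τ))‖ := by
  refine ⟨10, π / (2 * (M ^ 2 + 1)), by norm_num, by positivity, ?_⟩
  rintro τ ⟨him, hre⟩ hδ
  have hτ0 : τ ≠ 0 := fun h => by simp [h] at him
  have hN0 : 0 < Complex.normSq τ := Complex.normSq_pos.mpr hτ0
  set r : ℝ := τ.im / Complex.normSq τ with hrdef
  have hr : 0 < r := div_pos him hN0
  set L : ℝ := π * r with hLdef
  -- L ≥ 2
  have hresq : τ.re ^ 2 ≤ (M * τ.im) ^ 2 := by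
    rw [← _root_.sq_abs]; exact pow_le_pow_left₀ (abs_nonneg _) hre 2
  have himδ : τ.im < π / (2 * (M ^ 2 + 1)) :=
    lt_of_le_of_lt (le_trans (le_abs_self _) (Complex.abs_im_le_norm τ)) hδ
  have hL2 : 2 ≤ L := by
    have h2 : τ.im * (2 * (M ^ 2 + 1)) < π := (lt_div_iff₀ (by positivity)).mp himδ
    have hNle : Complex.normSq τ ≤ (M ^ 2 + 1) * τ.im ^ 2 := by
      rw [Complex.normSq_apply]; nlinarith
    have h3 : 2 * Complex.normSq τ ≤ π * τ.im := by nlinarith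
    rw [hLdef, hrdef]
    rw [mul_div_assoc', le_div_iff₀ hN0]
    linarith
  have hL1 : (1:ℝ) ≤ L / 2 := by linarith
  set s : ℝ := Real.exp (-(L / 2)) with hsdef
  have hs0 : 0 < s := Real.exp_pos _
  have hs12 : s ≤ 1 / 2 := by
    have h1 : Real.exp 1 ≤ Real.exp (L / 2) := Real.exp_le_exp.mpr hL1
    have h2 : (2:ℝ) ≤ Real.exp (L / 2) := le_trans (by linarith [Real.exp_one_gt_d9]) h1
    rw [hsdef, Real.exp_neg]
    rw [inv_le_comm₀ (Real.exp_pos _) (by norm_num)]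
    norm_num at h2 ⊢
    linarith
  -- norms of exponentials
  have hIτ : (I / τ).re = r := by rw [Complex.div_re]; simp [hrdef]
  have hnorm : ∀ c : ℝ, ‖Complex.exp ((c : ℂ) * (I / τ))‖ = Real.exp (c * r) := by
    intro c
    rw [Complex.norm_exp, Complex.re_ofReal_mul, hIτ]
  -- the majorant
  set g : ℤ → ℝ := fun n => 2 * s ^ (max n.natAbs 1) with hgdef
  -- HasSum for the majorant
  have hgeo : HasSum (fun n : ℕ => s ^ n) (1 - s)⁻¹ :=
    hasSum_geometric_of_lt_one hs0.le (by linarith)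
  have hnat : HasSum (fun n : ℕ => g n) (2 * s - 2 * s ^ 0 + 2 * (1 - s)⁻¹) := by
    have h0 : HasSum (fun n : ℕ => 2 * s ^ n) (2 * (1 - s)⁻¹) := hgeo.mul_left 2
    have h1 := h0.update 0 (2 * s)
    have heq : Function.update (fun n : ℕ => 2 * s ^ n) 0 (2 * s) = fun n : ℕ => g n := by
      funext n
      cases n with
      | zero => simp [hgdef]
      | succ k =>
        rw [Function.update_of_ne (Nat.succ_ne_zero k)]
        have hk : ((k + 1 : ℕ) : ℤ).natAbs = k + 1 := by omega
        simp only [hgdef, hk, Nat.max_eq_left (Nat.succ_le_succ (Nat.zero_le k))]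
    rw [heq] at h1
    exact h1
  have hneg : HasSum (fun n : ℕ => g (-((n : ℤ) + 1))) (2 * s * (1 - s)⁻¹) := by
    have h0 : HasSum (fun n : ℕ => 2 * s * s ^ n) (2 * s * (1 - s)⁻¹) := hgeo.mul_left (2 * s)
    refine h0.congr_fun fun n => ?_
    have : (-((n : ℤ) + 1)).natAbs = n + 1 := by omega
    rw [hgdef]
    simp only [this, Nat.max_eq_left (Nat.succ_le_succ (Nat.zero_le n))]
    rw [pow_succ]
    ring
  have htotal : HasSum g ((2 * s - 2 * s ^ 0 + 2 * (1 - s)⁻¹) + 2 * s * (1 - s)⁻¹) :=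
    HasSum.of_nat_of_neg_add_one hnat hneg
  have hA : (2 * s - 2 * s ^ 0 + 2 * (1 - s)⁻¹) + 2 * s * (1 - s)⁻¹ ≤ 10 * s := by
    have hs1 : (1:ℝ) - s ≠ 0 := by linarith
    have hinv : (1 - s) * (1 - s)⁻¹ = 1 := mul_inv_cancel₀ hs1
    have hx0 : (0:ℝ) ≤ (1 - s)⁻¹ := inv_nonneg.mpr (by linarith)
    have hx2 : (1 - s)⁻¹ ≤ 2 := by nlinarith
    nlinarith
  -- term bound
  have hbound : ∀ n : ℤ,
      ‖(-1 : ℂ) ^ n * Complex.exp (2 * π * I * (n : ℂ) * (1 / (4 * τ))) *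
        Complex.exp (π * I * (n : ℂ) * ((n : ℂ) + 1) * (-1 / (2 * τ))) /
        (1 - Complex.exp (2 * π * I * (1 / (4 * τ))) *
          Complex.exp (2 * π * I * (n : ℂ) * (-1 / (2 * τ))))‖ ≤ g n := by
    intro n
    have hA1 : 2 * (π:ℂ) * I * (n : ℂ) * (1 / (4 * τ)) = ((π * n / 2 : ℝ) : ℂ) * (I / τ) := by
      push_cast; ring
    have hB1 : (π:ℂ) * I * (n : ℂ) * ((n : ℂ) + 1) * (-1 / (2 * τ)) =
        ((-(π * n * (n + 1) / 2) : ℝ) : ℂ) * (I / τ) := by push_cast; ring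
    have hD1 : Complex.exp (2 * π * I * (1 / (4 * τ))) *
        Complex.exp (2 * π * I * (n : ℂ) * (-1 / (2 * τ))) =
        Complex.exp (((π * (1 / 2 - n) : ℝ) : ℂ) * (I / τ)) := by
      rw [← Complex.exp_add]; congr 1; push_cast; ring
    rw [hA1, hB1, hD1, norm_div, norm_mul, norm_mul]
    have h1n : ‖(-1 : ℂ) ^ n‖ = 1 := by simp
    rw [h1n, one_mul, hnorm, hnorm, ← Real.exp_add]
    have hsm : g n = 2 * Real.exp ((max n.natAbs 1 : ℕ) * (-(L / 2))) := by
      simp only [hgdef]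
      rw [hsdef, ← Real.exp_nat_mul]
    rw [hsm]
    rcases le_or_gt 1 n with hn | hn
    · -- n ≥ 1 : denominator close to 1
      have hn1 : (1:ℝ) ≤ (n:ℝ) := by exact_mod_cast hn
      have hEle : Real.exp (π * (1 / 2 - (n:ℝ)) * r) ≤ 1 / 2 := by
        have hexp : π * (1 / 2 - (n:ℝ)) * r ≤ -(L / 2) := by
          rw [hLdef]
          nlinarith [mul_le_mul_of_nonneg_left hn1 (mul_pos Real.pi_pos hr).le]
        calc Real.exp (π * (1 / 2 - (n:ℝ)) * r) ≤ s := Real.exp_le_exp.mpr hexp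
          _ ≤ 1 / 2 := hs12
      have hden : 1 / 2 ≤ ‖1 - Complex.exp (((π * (1 / 2 - (n:ℝ)) : ℝ) : ℂ) * (I / τ))‖ := by
        have h := norm_sub_norm_le (1 : ℂ)
          (Complex.exp (((π * (1 / 2 - (n:ℝ)) : ℝ) : ℂ) * (I / τ)))
        rw [hnorm, norm_one] at h
        linarith
      calc Real.exp (π * (n:ℝ) / 2 * r + -(π * (n:ℝ) * ((n:ℝ) + 1) / 2) * r) /
            ‖1 - Complex.exp (((π * (1 / 2 - (n:ℝ)) : ℝ) : ℂ) * (I / τ))‖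
          ≤ Real.exp (π * (n:ℝ) / 2 * r + -(π * (n:ℝ) * ((n:ℝ) + 1) / 2) * r) / (1 / 2) :=
            div_le_div_of_nonneg_left (Real.exp_pos _).le (by norm_num) hden
        _ = 2 * Real.exp (π * (n:ℝ) / 2 * r + -(π * (n:ℝ) * ((n:ℝ) + 1) / 2) * r) := by ring
        _ ≤ 2 * Real.exp ((max n.natAbs 1 : ℕ) * (-(L / 2))) := by
            have hm : ((max n.natAbs 1 : ℕ) : ℝ) = (n : ℝ) := by
              have h2 : max n.natAbs 1 = n.natAbs := max_eq_left (by omega)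
              rw [h2, Nat.cast_natAbs]
              push_cast
              exact abs_of_nonneg (by linarith)
            have : π * (n:ℝ) / 2 * r + -(π * (n:ℝ) * ((n:ℝ) + 1) / 2) * r ≤
                ((max n.natAbs 1 : ℕ) : ℝ) * (-(L / 2)) := by
              rw [hm, hLdef]
              have hptr : (0:ℝ) ≤ π * r * (n:ℝ) :=
                mul_nonneg (mul_pos Real.pi_pos hr).le (by linarith)
              nlinarith [mul_le_mul_of_nonneg_left hn1 hptr]
            exact mul_le_mul_of_nonneg_left (Real.exp_le_exp.mpr this) (by norm_num)
    · -- n ≤ 0 : denominator large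
      have hn0 : n ≤ 0 := by omega
      have hn0' : (n:ℝ) ≤ 0 := by exact_mod_cast hn0
      have hE2 : 2 ≤ Real.exp (π * (1 / 2 - (n:ℝ)) * r) := by
        have hexp : L / 2 ≤ π * (1 / 2 - (n:ℝ)) * r := by
          rw [hLdef]
          nlinarith [mul_nonneg (mul_pos Real.pi_pos hr).le (neg_nonneg.mpr hn0')]
        have h1 : Real.exp 1 ≤ Real.exp (π * (1 / 2 - (n:ℝ)) * r) :=
          Real.exp_le_exp.mpr (by linarith)
        linarith [Real.exp_one_gt_d9]
      have hden : Real.exp (π * (1 / 2 - (n:ℝ)) * r) / 2 ≤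
          ‖1 - Complex.exp (((π * (1 / 2 - (n:ℝ)) : ℝ) : ℂ) * (I / τ))‖ := by
        have h := norm_sub_norm_le
          (Complex.exp (((π * (1 / 2 - (n:ℝ)) : ℝ) : ℂ) * (I / τ))) (1 : ℂ)
        rw [hnorm, norm_one, norm_sub_rev] at h
        linarith
      have hdpos : 0 < Real.exp (π * (1 / 2 - (n:ℝ)) * r) / 2 := by positivity
      calc Real.exp (π * (n:ℝ) / 2 * r + -(π * (n:ℝ) * ((n:ℝ) + 1) / 2) * r) /
            ‖1 - Complex.exp (((π * (1 / 2 - (n:ℝ)) : ℝ) : ℂ) * (I / τ))‖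
          ≤ Real.exp (π * (n:ℝ) / 2 * r + -(π * (n:ℝ) * ((n:ℝ) + 1) / 2) * r) /
            (Real.exp (π * (1 / 2 - (n:ℝ)) * r) / 2) :=
            div_le_div_of_nonneg_left (Real.exp_pos _).le hdpos hden
        _ = 2 * Real.exp (π * (n:ℝ) / 2 * r + -(π * (n:ℝ) * ((n:ℝ) + 1) / 2) * r -
              π * (1 / 2 - (n:ℝ)) * r) := by
            rw [Real.exp_sub]; ring
        _ ≤ 2 * Real.exp ((max n.natAbs 1 : ℕ) * (-(L / 2))) := by
            have hm : ((max n.natAbs 1 : ℕ) : ℝ) ≤ ((n:ℝ) - 1) ^ 2 := by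
              rw [Nat.cast_max, Nat.cast_natAbs]
              push_cast
              rw [abs_of_nonpos hn0']
              refine max_le (by nlinarith) (by nlinarith)
            have : π * (n:ℝ) / 2 * r + -(π * (n:ℝ) * ((n:ℝ) + 1) / 2) * r -
                π * (1 / 2 - (n:ℝ)) * r ≤ ((max n.natAbs 1 : ℕ) : ℝ) * (-(L / 2)) := by
              rw [hLdef]
              nlinarith [mul_pos Real.pi_pos hr,
                mul_le_mul_of_nonneg_right hm (mul_pos Real.pi_pos hr).le]
            exact mul_le_mul_of_nonneg_left (Real.exp_le_exp.mpr this) (by norm_num)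
  -- assemble
  unfold appell
  rw [norm_mul]
  have hts : ‖∑' n : ℤ, (-1 : ℂ) ^ n * Complex.exp (2 * π * I * (n : ℂ) * (1 / (4 * τ))) *
      Complex.exp (π * I * (n : ℂ) * ((n : ℂ) + 1) * (-1 / (2 * τ))) /
      (1 - Complex.exp (2 * π * I * (1 / (4 * τ))) *
        Complex.exp (2 * π * I * (n : ℂ) * (-1 / (2 * τ))))‖ ≤ 10 * s :=
    le_trans (tsum_of_norm_bounded htotal hbound) hA
  have hpref : (π:ℂ) * I * (1 / (4 * τ)) = ((π / 4 : ℝ) : ℂ) * (I / τ) := by push_cast; ring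
  have hrhs : -((π:ℂ) * I) / (4 * τ) = ((-(π / 4) : ℝ) : ℂ) * (I / τ) := by push_cast; ring
  rw [hpref, hrhs, hnorm, hnorm]
  calc Real.exp (π / 4 * r) * ‖∑' n : ℤ, (-1 : ℂ) ^ n *
        Complex.exp (2 * π * I * (n : ℂ) * (1 / (4 * τ))) *
        Complex.exp (π * I * (n : ℂ) * ((n : ℂ) + 1) * (-1 / (2 * τ))) /
        (1 - Complex.exp (2 * π * I * (1 / (4 * τ))) *
          Complex.exp (2 * π * I * (n : ℂ) * (-1 / (2 * τ))))‖
      ≤ Real.exp (π / 4 * r) * (10 * s) :=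
        mul_le_mul_of_nonneg_left hts (Real.exp_pos _).le
    _ = 10 * Real.exp (-(π / 4) * r) := by
        have hxy : Real.exp (π / 4 * r) * Real.exp (-(π * r / 2)) =
            Real.exp (-(π / 4) * r) := by
          rw [← Real.exp_add]; ring_nf
        rw [hsdef, hLdef]
        calc Real.exp (π / 4 * r) * (10 * Real.exp (-(π * r / 2)))
            = 10 * (Real.exp (π / 4 * r) * Real.exp (-(π * r / 2))) := by ring
          _ = 10 * Real.exp (-(π / 4) * r) := by rw [hxy]
end
end
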